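/- Let d, L ≥ 1, and let A₁, A₂, A₃, Y ∈ ℝ^{d×L} and W, W_{OV} ∈ ℝ^{d×d}. Set 𝔸 := A₁ᵀ ⊗ A₂ᵀ ∈ ℝ^{L²×d²} (Kronecker product), and for j₀ ∈ {1,…,L} let 𝔸_{j₀} ∈ ℝ^{L×d²} denote the j₀-th block of L consecutive rows of 𝔸. Define, for j₀ ∈ {1,…,L} and i₀ ∈ {1,…,d}: u(W)_{j₀} := exp(𝔸_{j₀} vec(W)) ∈ ℝ^L, α(W)_{j₀} := ⟨u(W)_{j₀}, 1_L⟩, f(W)_{j₀} := α(W)_{j₀}^{-1} u(W)_{j₀}, h(W_{OV})_{i₀} := A₃ᵀ (W_{OV}ᵀ)_{*,i₀} ∈ ℝ^L, and c(W)_{j₀,i₀} := ⟨f(W)_{j₀}, h(W_{OV})_{i₀}⟩ − (Yᵀ)_{j₀,i₀}. Then the gradient with respect to vec(W) ∈ ℝ^{d²} of the loss G(W) := (1/2) Σ_{j₀=1}^{L} Σ_{i₀=1}^{d} c(W)_{j₀,i₀}² is ∇_{vec(W)} G(W) = Σ_{j₀=1}^{L} Σ_{i₀=1}^{d} c(W)_{j₀,i₀}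 · 𝔸_{j₀}ᵀ ( diag(f(W)_{j₀}) − f(W)_{j₀} f(W)_{j₀}ᵀ ) h(W_{OV})_{i₀}. -/

import Mathlib

/-!
The loss is half a sum of squares, so its gradient is `Σ c ∇c`. Each residual `c` is
`⟨softmax (𝔸_{j₀} vec W), h⟩ - y`; the quotient rule for `softmax z = u / ⟨u, 1⟩` with
`u = exp z` shows that the gradient of `z ↦ ⟨softmax z, h⟩` is `(diag f - f fᵀ) h` with
`f = softmax z`, and the chain rule through the linear map `vec W ↦ 𝔸_{j₀} vec W` contributes
the factor `𝔸_{j₀}ᵀ`.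
-/

open Matrix BigOperators

namespace DiTGrad

variable {d L : ℕ}

/-- The `j₀`-th block of `L` consecutive rows of `𝔸 = A₁ᵀ ⊗ A₂ᵀ`. -/
noncomputable def Ablock (A₁ A₂ : Matrix (Fin d) (Fin L) ℝ) (j₀ : Fin L) :
    Matrix (Fin L) (Fin d × Fin d) ℝ :=
  Matrix.of fun j p => Matrix.kroneckerMap (· * ·) A₁ᵀ A₂ᵀ (j₀, j) p

/-- `u(W)_{j₀} = exp(𝔸_{j₀} vec(W))`. -/
noncomputable def uVec (A₁ A₂ : Matrix (Fin d) (Fin L) ℝ) (j₀ : Fin L)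
    (w : Fin d × Fin d → ℝ) : Fin L → ℝ :=
  fun j => Real.exp ((Ablock A₁ A₂ j₀).mulVec w j)

/-- `α(W)_{j₀} = ⟨u(W)_{j₀}, 1_L⟩`. -/
noncomputable def alphaVal (A₁ A₂ : Matrix (Fin d) (Fin L) ℝ) (j₀ : Fin L)
    (w : Fin d × Fin d → ℝ) : ℝ :=
  ∑ j, uVec A₁ A₂ j₀ w j

/-- `f(W)_{j₀} = α(W)_{j₀}⁻¹ u(W)_{j₀}`. -/
noncomputable def fVec (A₁ A₂ : Matrix (Fin d) (Fin L) ℝ) (j₀ : Fin L)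
    (w : Fin d × Fin d → ℝ) : Fin L → ℝ :=
  fun j => (alphaVal A₁ A₂ j₀ w)⁻¹ * uVec A₁ A₂ j₀ w j

/-- `h(W_{OV})_{i₀} = A₃ᵀ (W_{OV}ᵀ)_{*,i₀}`. -/
noncomputable def hVec (A₃ : Matrix (Fin d) (Fin L) ℝ) (WOV : Matrix (Fin d) (Fin d) ℝ)
    (i₀ : Fin d) : Fin L → ℝ :=
  fun j => ∑ i, A₃ i j * WOV i₀ i

/-- `c(W)_{j₀,i₀} = ⟨f(W)_{j₀}, h(W_{OV})_{i₀}⟩ − (Yᵀ)_{j₀,i₀}`. -/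
noncomputable def cVal (A₁ A₂ A₃ Y : Matrix (Fin d) (Fin L) ℝ)
    (WOV : Matrix (Fin d) (Fin d) ℝ) (j₀ : Fin L) (i₀ : Fin d)
    (w : Fin d × Fin d → ℝ) : ℝ :=
  (∑ j, fVec A₁ A₂ j₀ w j * hVec A₃ WOV i₀ j) - Yᵀ j₀ i₀

/-- The simplified DiT loss `G(W) = (1/2) Σ_{j₀,i₀} c(W)_{j₀,i₀}²` as a function of
`vec(W)`. -/
noncomputable def lossG (A₁ A₂ A₃ Y : Matrix (Fin d) (Fin L) ℝ)
    (WOV : Matrix (Fin d) (Fin d) ℝ) (w : Fin d × Fin d → ℝ) : ℝ :=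
  (1 / 2) * ∑ j₀, ∑ i₀, (cVal A₁ A₂ A₃ Y WOV j₀ i₀ w) ^ 2

end DiTGrad

section Softmax

variable {ι κ : Type*} [Fintype ι]

noncomputable def softmax (z : ι → ℝ) : ι → ℝ :=
  fun j => (∑ k, Real.exp (z k))⁻¹ * Real.exp (z j)

noncomputable def softmaxJacobian [DecidableEq ι] (z : ι → ℝ) : Matrix ι ι ℝ :=
  diagonal (softmax z) - vecMulVec (softmax z) (softmax z)

noncomputable def dotProductCLM (a : ι → ℝ) : (ι → ℝ) →L[ℝ] ℝ :=
  LinearMap.toContinuousLinearMap (dotProductBilin ℝ ℝ a)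

@[simp]
lemma dotProductCLM_apply (a v : ι → ℝ) : dotProductCLM a v = a ⬝ᵥ v := rfl

lemma softmaxJacobian_mulVec [DecidableEq ι] (z h : ι → ℝ) (j : ι) :
    (softmaxJacobian z *ᵥ h) j = softmax z j * h j - softmax z j * (softmax z ⬝ᵥ h) := by
  simp [softmaxJacobian, sub_mulVec, mulVec_diagonal, vecMulVec_mulVec, mul_comm]

theorem hasFDerivAt_softmax_dotProduct [DecidableEq ι] [Nonempty ι] (z h : ι → ℝ) :
    HasFDerivAt (fun z => softmax z ⬝ᵥ h) (dotProductCLM (softmaxJacobian z *ᵥ h)) z := by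
  have hexp (j : ι) : HasFDerivAt (fun z : ι → ℝ => Real.exp (z j))
      (Real.exp (z j) • ContinuousLinearMap.proj j) z :=
    (hasFDerivAt_apply j z).exp
  have hden := HasFDerivAt.fun_sum fun k (_ : k ∈ Finset.univ) => hexp k
  have hnum := HasFDerivAt.fun_sum fun k (_ : k ∈ Finset.univ) => (hexp k).mul_const (h k)
  set α := ∑ k, Real.exp (z k)
  set S := ∑ j, Real.exp (z j) * h j
  have hα : α ≠ 0 := (Finset.sum_pos (fun k _ => Real.exp_pos _) Finset.univ_nonempty).ne'
  have hquot : (fun z => softmax z ⬝ᵥ h)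
      = fun z => (∑ k, Real.exp (z k))⁻¹ * ∑ j, Real.exp (z j) * h j := by
    funext z
    simp [softmax, dotProduct, Finset.mul_sum, mul_assoc]
  rw [hquot]
  refine (((hasDerivAt_inv hα).comp_hasFDerivAt z hden).mul hnum).congr_fderiv ?_
  have hfh : softmax z ⬝ᵥ h = α⁻¹ * S := by
    simp only [softmax, dotProduct, Finset.mul_sum, mul_assoc, S, α]
  ext v
  have hterm (j : ι) : (softmaxJacobian z *ᵥ h) j * v j
      = α⁻¹ * (h j * (Real.exp (z j) * v j)) - α⁻¹ * S * α⁻¹ * (Real.exp (z j) * v j) := by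
    rw [softmaxJacobian_mulVec, hfh, softmax]
    ring
  simp only [dotProductCLM_apply, dotProduct, hterm, Finset.sum_sub_distrib, ← Finset.mul_sum]
  simp only [Function.comp_apply, _root_.add_apply, _root_.smul_apply, _root_.sum_apply,
    ContinuousLinearMap.proj_apply, smul_eq_mul]
  ring

theorem hasFDerivAt_softmax_mulVec_dotProduct [DecidableEq ι] [Nonempty ι] [Fintype κ]
    (M : Matrix ι κ ℝ) (h : ι → ℝ) (w : κ → ℝ) :
    HasFDerivAt (fun w => softmax (M *ᵥ w) ⬝ᵥ h)
      (dotProductCLM (Mᵀ *ᵥ (softmaxJacobian (M *ᵥ w) *ᵥ h))) w := by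
  refine ((hasFDerivAt_softmax_dotProduct _ h).comp w
    (LinearMap.toContinuousLinearMap M.mulVecLin).hasFDerivAt).congr_fderiv ?_
  ext v
  simp only [dotProductCLM_apply, ContinuousLinearMap.comp_apply,
    LinearMap.coe_toContinuousLinearMap', mulVecLin_apply, dotProduct_mulVec, mulVec_transpose]

end Softmax

theorem HasFDerivAt.half_sum_sum_sq {α β E : Type*} [Fintype α] [Fintype β]
    [NormedAddCommGroup E] [NormedSpace ℝ E] {c : α → β → E → ℝ} {c' : α → β → E →L[ℝ] ℝ}
    {x : E} (hc : ∀ a b, HasFDerivAt (c a b) (c' a b) x) :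
    HasFDerivAt (fun x => 1 / 2 * ∑ a, ∑ b, c a b x ^ 2) (∑ a, ∑ b, c a b x • c' a b) x := by
  refine ((HasFDerivAt.fun_sum fun a _ => HasFDerivAt.fun_sum fun b _ =>
    (hc a b).pow 2).const_mul (1 / 2 : ℝ)).congr_fderiv ?_
  simp only [Finset.smul_sum, smul_smul]
  congr! 3
  ring

namespace DiTGrad

lemma fVec_eq_softmax {d L : ℕ} (A₁ A₂ : Matrix (Fin d) (Fin L) ℝ) (j₀ : Fin L)
    (w : Fin d × Fin d → ℝ) :
    fVec A₁ A₂ j₀ w = softmax (Ablock A₁ A₂ j₀ *ᵥ w) :=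
  rfl

theorem dit_gradient_low_rank_decomposition_general
    (d L : ℕ)
    (A₁ A₂ A₃ Y : Matrix (Fin d) (Fin L) ℝ) (W WOV : Matrix (Fin d) (Fin d) ℝ)
    (p : Fin d × Fin d) :
    fderiv ℝ (lossG A₁ A₂ A₃ Y WOV) (fun q : Fin d × Fin d => W q.1 q.2) (Pi.single p 1)
      = ∑ j₀, ∑ i₀,
          cVal A₁ A₂ A₃ Y WOV j₀ i₀ (fun q => W q.1 q.2) *
            ∑ j, Ablock A₁ A₂ j₀ j p *
              (fVec A₁ A₂ j₀ (fun q => W q.1 q.2) j * hVec A₃ WOV i₀ j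
                - fVec A₁ A₂ j₀ (fun q => W q.1 q.2) j *
                    ∑ j', fVec A₁ A₂ j₀ (fun q => W q.1 q.2) j' * hVec A₃ WOV i₀ j') := by
  set w : Fin d × Fin d → ℝ := fun q => W q.1 q.2
  have hc (j₀ : Fin L) (i₀ : Fin d) : HasFDerivAt (cVal A₁ A₂ A₃ Y WOV j₀ i₀)
      (dotProductCLM ((Ablock A₁ A₂ j₀)ᵀ *ᵥ
        (softmaxJacobian (Ablock A₁ A₂ j₀ *ᵥ w) *ᵥ hVec A₃ WOV i₀))) w :=
    have : Nonempty (Fin L) := ⟨j₀⟩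
    (hasFDerivAt_softmax_mulVec_dotProduct _ _ w).sub_const _
  have hG : HasFDerivAt (lossG A₁ A₂ A₃ Y WOV) _ w := HasFDerivAt.half_sum_sum_sq hc
  rw [hG.fderiv]
  simp only [_root_.sum_apply, _root_.smul_apply, dotProductCLM_apply, dotProduct_single_one,
    smul_eq_mul, mulVec_transpose]
  simp only [vecMul, dotProduct, softmaxJacobian_mulVec, fVec_eq_softmax,
    mul_comm _ (Ablock A₁ A₂ _ _ p)]

/-- Low-rank decomposition of the DiT gradient:
`∇_{vec(W)} G(W) = Σ_{j₀,i₀} c_{j₀,i₀} 𝔸_{j₀}ᵀ (diag(f_{j₀}) − f_{j₀} f_{j₀}ᵀ) h_{i₀}`,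
stated componentwise at each coordinate `p` of `vec(W)`. -/
theorem dit_gradient_low_rank_decomposition
    (d L : ℕ) (hd : 1 ≤ d) (hL : 1 ≤ L)
    (A₁ A₂ A₃ Y : Matrix (Fin d) (Fin L) ℝ) (W WOV : Matrix (Fin d) (Fin d) ℝ)
    (p : Fin d × Fin d) :
    fderiv ℝ (lossG A₁ A₂ A₃ Y WOV) (fun q : Fin d × Fin d => W q.1 q.2) (Pi.single p 1)
      = ∑ j₀, ∑ i₀,
          cVal A₁ A₂ A₃ Y WOV j₀ i₀ (fun q => W q.1 q.2) *
            ∑ j, Ablock A₁ A₂ j₀ j p *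
              (fVec A₁ A₂ j₀ (fun q => W q.1 q.2) j * hVec A₃ WOV i₀ j
                - fVec A₁ A₂ j₀ (fun q => W q.1 q.2) j *
                    ∑ j', fVec A₁ A₂ j₀ (fun q => W q.1 q.2) j' * hVec A₃ WOV i₀ j') :=
  dit_gradient_low_rank_decomposition_general d L A₁ A₂ A₃ Y W WOV p

end DiTGrad
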